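/- arXiv:math/0011236 — 9 statements merged into one kernel-verified Lean document; each statement's English description precedes it below -/
import Mathlib

section
/- Let P = ⊕_{i≥0} P_i be a nonnegatively graded module over the exterior algebra E = ⋀V*. Then the following are equivalent: (i) for every i ≥ 1, the k-linear map P_i → Hom_k(V*, P_{i−1}) sending p to (e ↦ e·p) is injective; (ii) for every i ≥ 1, the k-linear map P_i → Hom_k(⋀^i V*, P_0) sending p to (ω ↦ ω·p) is injective. -/
/-- Let `P = ⊕_{i ≥ 0} P_i` be a nonnegatively graded module over the
exterior algebra `E = ⋀V*` (so that `e • P_{i+1} ⊆ P_i` for `e ∈ V*`, and `V*` kills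
`P_0`).  Then the following are equivalent: (i) for every `i ≥ 1` the map
`P_i → Hom_k(V*, P_{i-1})`, `p ↦ (e ↦ e·p)`, is injective (i.e. has trivial kernel);
(ii) for every `i ≥ 1` the map `P_i → Hom_k(⋀^i V*, P_0)`, `p ↦ (ω ↦ ω·p)`, is injective
(i.e. has trivial kernel).  Here `⋀^i V*` is the `i`-th power of the image of `V*` inside
`E`. -/
theorem irredundant_iff_dual_generated_in_degree_zero
    (k : Type) [Field k] (V : Type) [AddCommGroup V] [Module k V] [FiniteDimensional k V]
    (P : Type) [AddCommGroup P] [Module k P]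
    [Module (ExteriorAlgebra k (Module.Dual k V)) P]
    [IsScalarTower k (ExteriorAlgebra k (Module.Dual k V)) P]
    (Pgr : ℕ → Submodule k P)
    (hdirect : DirectSum.IsInternal Pgr)
    (hact : ∀ (i : ℕ) (e : Module.Dual k V), ∀ p ∈ Pgr (i + 1),
      ExteriorAlgebra.ι k e • p ∈ Pgr i)
    (hzero : ∀ (e : Module.Dual k V), ∀ p ∈ Pgr 0, ExteriorAlgebra.ι k e • p = 0) :
    (∀ i : ℕ, 1 ≤ i → ∀ p ∈ Pgr i,
        (∀ e : Module.Dual k V, ExteriorAlgebra.ι k e • p = 0) → p = 0)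
      ↔ (∀ i : ℕ, 1 ≤ i → ∀ p ∈ Pgr i,
        (∀ ω ∈ (LinearMap.range (ExteriorAlgebra.ι k (M := Module.Dual k V)) :
            Submodule k (ExteriorAlgebra k (Module.Dual k V))) ^ i, ω • p = 0) → p = 0) := by
  set M := (LinearMap.range (ExteriorAlgebra.ι k (M := Module.Dual k V)) :
      Submodule k (ExteriorAlgebra k (Module.Dual k V))) with hM
  constructor
  · intro hi
    -- strong form by induction on i
    have key : ∀ i : ℕ, ∀ p ∈ Pgr (i + 1), (∀ ω ∈ M ^ (i + 1), ω • p = 0) → p = 0 := by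
      intro i
      induction i with
      | zero =>
        intro p hp hω
        refine hi 1 le_rfl p hp (fun e => ?_)
        exact hω _ (by simpa [pow_one, hM] using LinearMap.mem_range_self _ e)
      | succ n ih =>
        intro p hp hω
        refine hi (n + 2) (by omega) p hp (fun e => ?_)
        refine ih _ (hact (n + 1) e p hp) (fun ω hωm => ?_)
        rw [← mul_smul]
        refine hω _ ?_
        have : ω * ExteriorAlgebra.ι k e ∈ M ^ (n + 1) * M :=
          Submodule.mul_mem_mul hωm (by simpa [hM] using LinearMap.mem_range_self _ e)
        simpa [pow_succ] using this
    intro i hi1 p hp hω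
    obtain ⟨j, rfl⟩ : ∃ j, i = j + 1 := ⟨i - 1, by omega⟩
    exact key j p hp hω
  · intro hii
    have key : ∀ (p : P), (∀ e : Module.Dual k V, ExteriorAlgebra.ι k e • p = 0) →
        ∀ n : ℕ, ∀ ω ∈ M ^ (n + 1), ω • p = 0 := by
      intro p hp n
      induction n with
      | zero =>
        intro ω hω
        rw [pow_one, hM] at hω
        obtain ⟨e, rfl⟩ := hω
        exact hp e
      | succ n ih =>
        intro ω hω
        rw [pow_succ] at hω
        refine Submodule.mul_induction_on hω (fun a ha b hb => ?_)
          (fun x y hx hy => by rw [add_smul, hx, hy, add_zero])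
        obtain ⟨e, rfl⟩ := hb
        rw [mul_smul, hp e, smul_zero]
    intro i hi1 p hp hpe
    obtain ⟨j, rfl⟩ : ∃ j, i = j + 1 := ⟨i - 1, by omega⟩
    exact hii (j + 1) hi1 p hp (key p hpe j)
end

section
/- Let F_• be an irredundant standard linear free complex over S = k[x_0,…,x_r] and let G_• be a minimal complex of finitely generated graded free S-modules. If α_• : F_• → G_• is a morphism of chain complexes of graded S-modules (all maps of degree zero) such that α_0 : F_0 → G_0 is a split monomorphism, then α_i : F_i → G_i is a split monomorphism for every i ≥ 0. -/
/-!
Over a field, an `S`-matrix `A` whose rows are homogeneous has a left inverse as soon as its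
matrix of constant terms is injective: the rows of degree zero are constant, and the other rows
have no constant terms. So, inductively, it suffices to show that the constant terms of `α_{i+1}`
form an injective matrix when `α_i` is split. If `α_{i+1} v ∈ m` for a constant vector `v`, then
`α_i (d v) = d (α_{i+1} v) ∈ m²` by minimality of `G`, hence `d v ∈ m²` because `α_i` is split.
But `d v` is linear, so `d v = 0`, and `v = 0` by irredundance of `F`.
-/

open MvPolynomial Matrix

theorem Matrix.exists_mul_eq_one_of_mulVec_injective {K m n : Type*} [Field K] [Fintype m]
    [Fintype n] [DecidableEq n] {A : Matrix m n K} (hA : Function.Injective A.mulVec) :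
    ∃ B : Matrix n m K, B * A = 1 := by
  classical
  obtain ⟨g, hg⟩ := A.mulVecLin.exists_leftInverse_of_injective (LinearMap.ker_eq_bot.mpr hA)
  refine ⟨LinearMap.toMatrix' g, ?_⟩
  rw [← LinearMap.toMatrix'_toLin' A, ← LinearMap.toMatrix'_comp, Matrix.toLin'_apply', hg,
    LinearMap.toMatrix'_id]

theorem Ideal.mulVec_mem_mul {R m n : Type*} [CommSemiring R] [Fintype n] {I J : Ideal R}
    {A : Matrix m n R} {v : n → R} (hA : ∀ i j, A i j ∈ I) (hv : ∀ j, v j ∈ J) (i : m) :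
    (A *ᵥ v) i ∈ I * J :=
  Ideal.sum_mem _ fun j _ => Ideal.mul_mem_mul (hA i j) (hv j)

namespace MvPolynomial

variable {σ R : Type*} [CommSemiring R]

theorem mem_idealOfVars_iff_constantCoeff_eq_zero {p : MvPolynomial σ R} :
    p ∈ idealOfVars σ R ↔ constantCoeff p = 0 := by
  rw [← pow_one (idealOfVars σ R), mem_pow_idealOfVars_iff']
  simp [Finsupp.degree_eq_zero_iff, constantCoeff_eq]

theorem IsHomogeneous.eq_zero_of_mem_pow_idealOfVars {p : MvPolynomial σ R} {n : ℕ}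
    (hp : p.IsHomogeneous n) (hmem : p ∈ idealOfVars σ R ^ (n + 1)) : p = 0 := by
  ext d
  rw [coeff_zero]
  by_cases hd : d.degree = n
  · exact (mem_pow_idealOfVars_iff' _ _).mp hmem d (by omega)
  · exact hp.coeff_eq_zero hd

end MvPolynomial

section GradedMatrices

variable {K σ : Type*} [Field K]

theorem exists_mul_eq_one_of_isHomogeneous_rows {m n : Type*} [Fintype m] [Fintype n]
    [DecidableEq n] {A : Matrix m n (MvPolynomial σ K)} (e : m → ℕ)
    (hA : ∀ x y, (A x y).IsHomogeneous (e x))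
    (hA₀ : Function.Injective (A.map constantCoeff).mulVec) :
    ∃ B : Matrix n m (MvPolynomial σ K), B * A = 1 := by
  classical
  obtain ⟨B₀, hB₀⟩ := Matrix.exists_mul_eq_one_of_mulVec_injective hA₀
  obtain ⟨P, hPA⟩ : ∃ P : Matrix m m (MvPolynomial σ K), P * A = (A.map constantCoeff).map C := by
    refine ⟨diagonal fun x => if e x = 0 then 1 else 0, Matrix.ext fun x y => ?_⟩
    rw [diagonal_mul, map_apply, map_apply]
    split_ifs with hx
    · rw [one_mul, constantCoeff_eq]
      exact totalDegree_eq_zero_iff_eq_C.mp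
        ((totalDegree_zero_iff_isHomogeneous σ).mpr (hx ▸ hA x y))
    · rw [zero_mul, constantCoeff_eq, (hA x y).coeff_eq_zero (by simpa using Ne.symm hx), map_zero]
  refine ⟨B₀.map (C : K →+* MvPolynomial σ K) * P, ?_⟩
  rw [Matrix.mul_assoc, hPA, ← Matrix.map_mul, hB₀, Matrix.map_one _ (map_zero C) (map_one C)]

variable {a a' b b' : Type*} [Fintype a] [Fintype a'] [Fintype b] [Fintype b']
  [DecidableEq a]

theorem map_constantCoeff_mulVec_injective_of_comm_sq {M : Matrix a a' (MvPolynomial σ K)}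
    {N : Matrix b b' (MvPolynomial σ K)} {A : Matrix b a (MvPolynomial σ K)}
    {A' : Matrix b' a' (MvPolynomial σ K)} {B : Matrix a b (MvPolynomial σ K)}
    (hM : ∀ x y, (M x y).IsHomogeneous 1)
    (hirr : ∀ v : a' → K, M *ᵥ (fun j => C (v j)) = 0 → v = 0)
    (hN : ∀ x y, constantCoeff (N x y) = 0) (hcomm : A * M = N * A') (hB : B * A = 1) :
    Function.Injective (A'.map constantCoeff).mulVec := by
  refine (injective_iff_map_eq_zero (A'.map constantCoeff).mulVecLin).mpr
    fun v (hv : A'.map constantCoeff *ᵥ v = 0) => ?_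
  apply hirr
  set c : a' → MvPolynomial σ K := fun j => C (v j)
  have hA'c : ∀ x, (A' *ᵥ c) x ∈ idealOfVars σ K := fun x => by
    rw [mem_idealOfVars_iff_constantCoeff_eq_zero, RingHom.map_mulVec]
    have : constantCoeff ∘ c = v := funext fun j => constantCoeff_C σ (v j)
    rw [this, hv, Pi.zero_apply]
  have hMc : M *ᵥ c = B *ᵥ (N *ᵥ (A' *ᵥ c)) := by
    rw [mulVec_mulVec, mulVec_mulVec, Matrix.mul_assoc B, ← hcomm, ← Matrix.mul_assoc, hB,
      Matrix.one_mul]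
  have hMc_mem : ∀ x, (M *ᵥ c) x ∈ idealOfVars σ K ^ 2 := by
    intro x
    rw [hMc, ← Ideal.top_mul (idealOfVars σ K ^ 2), pow_two]
    refine Ideal.mulVec_mem_mul (fun _ _ => Submodule.mem_top) (fun y => ?_) x
    exact Ideal.mulVec_mem_mul (fun _ _ => mem_idealOfVars_iff_constantCoeff_eq_zero.mpr (hN _ _))
      hA'c y
  have hMc_hom : ∀ x, ((M *ᵥ c) x).IsHomogeneous 1 := fun x =>
    IsHomogeneous.sum _ _ _ fun y _ => by simpa using (hM x y).mul (isHomogeneous_C σ (v y))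
  funext x
  exact (hMc_hom x).eq_zero_of_mem_pow_idealOfVars (hMc_mem x)

end GradedMatrices

theorem irredundant_linear_complex_splits_into_minimal_complex_general
    (k : Type) [Field k] (r : ℕ)
    -- the irredundant standard linear free complex F
    (a : ℕ → ℕ)
    (M : ∀ i : ℕ, Matrix (Fin (a i)) (Fin (a (i + 1))) (MvPolynomial (Fin (r + 1)) k))
    (hMlin : ∀ (i : ℕ) (x : Fin (a i)) (y : Fin (a (i + 1))), (M i x y).IsHomogeneous 1)
    (hirr : ∀ (i : ℕ) (v : Fin (a (i + 1)) → k),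
      (M i).mulVec (fun j => C (v j)) = 0 → v = 0)
    -- the minimal complex G of finitely generated graded free S-modules
    (b : ℕ → ℕ) (degG : ∀ i : ℕ, Fin (b i) → ℤ)
    (N : ∀ i : ℕ, Matrix (Fin (b i)) (Fin (b (i + 1))) (MvPolynomial (Fin (r + 1)) k))
    (hNmin : ∀ (i : ℕ) (x : Fin (b i)) (y : Fin (b (i + 1))), constantCoeff (N i x y) = 0)
    -- the morphism of chain complexes of graded S-modules α : F → G
    (A : ∀ i : ℕ, Matrix (Fin (b i)) (Fin (a i)) (MvPolynomial (Fin (r + 1)) k))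
    (hAhom : ∀ (i : ℕ) (x : Fin (b i)) (y : Fin (a i)),
      (A i x y).IsHomogeneous ((i : ℤ) - degG i x).toNat
        ∧ ((i : ℤ) - degG i x < 0 → A i x y = 0))
    (hchain : ∀ i : ℕ, A i * M i = N i * A (i + 1))
    -- α_0 is a split monomorphism
    (hsplit0 : ∃ B : Matrix (Fin (a 0)) (Fin (b 0)) (MvPolynomial (Fin (r + 1)) k),
      B * A 0 = 1) :
    -- then every α_i is a split monomorphism
    ∀ i : ℕ, ∃ B : Matrix (Fin (a i)) (Fin (b i)) (MvPolynomial (Fin (r + 1)) k),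
      B * A i = 1 := by
  intro i
  induction i with
  | zero => exact hsplit0
  | succ i ih =>
    obtain ⟨B, hB⟩ := ih
    exact exists_mul_eq_one_of_isHomogeneous_rows
      (fun x => (((i + 1 : ℕ) : ℤ) - degG (i + 1) x).toNat) (fun x y => (hAhom (i + 1) x y).1)
      (map_constantCoeff_mulVec_injective_of_comm_sq (hMlin i) (hirr i) (hNmin i) (hchain i) hB)

/-- Let `S = k[x_0, …, x_r]`.  A standard linear free complex
`F_• = (S(-i)^(a i), M i)` is encoded by its differentials: matrices `M i` of linear forms
with `M i * M (i+1) = 0`; it is irredundant if for each `i ≥ 0` the induced map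
`F_{i+1}/mF_{i+1} → mF_i/m²F_i` is injective, i.e. `(M i) *ᵥ (constants v) = 0 → v = 0`.
A minimal complex `G_•` of f.g. graded free `S`-modules is encoded by ranks `b i`,
generator degrees `degG i`, and differentials `N i` whose entries are homogeneous of the
appropriate degrees and lie in the irrelevant maximal ideal (zero constant coefficient).
A morphism `α_• : F_• → G_•` of chain complexes of graded `S`-modules is encoded by
matrices `A i` of homogeneous entries of the appropriate degrees with
`A i * M i = N i * A (i+1)`.  If `α_0` is a split monomorphism (its matrix has a left
inverse), then every `α_i` is a split monomorphism. -/
theorem irredundant_linear_complex_splits_into_minimal_complex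
    (k : Type) [Field k] (r : ℕ)
    -- the irredundant standard linear free complex F
    (a : ℕ → ℕ)
    (M : ∀ i : ℕ, Matrix (Fin (a i)) (Fin (a (i + 1))) (MvPolynomial (Fin (r + 1)) k))
    (hMlin : ∀ (i : ℕ) (x : Fin (a i)) (y : Fin (a (i + 1))), (M i x y).IsHomogeneous 1)
    (hMcx : ∀ i : ℕ, M i * M (i + 1) = 0)
    (hirr : ∀ (i : ℕ) (v : Fin (a (i + 1)) → k),
      (M i).mulVec (fun j => C (v j)) = 0 → v = 0)
    -- the minimal complex G of finitely generated graded free S-modules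
    (b : ℕ → ℕ) (degG : ∀ i : ℕ, Fin (b i) → ℤ)
    (N : ∀ i : ℕ, Matrix (Fin (b i)) (Fin (b (i + 1))) (MvPolynomial (Fin (r + 1)) k))
    (hNhom : ∀ (i : ℕ) (x : Fin (b i)) (y : Fin (b (i + 1))),
      (N i x y).IsHomogeneous (degG (i + 1) y - degG i x).toNat
        ∧ (degG (i + 1) y - degG i x < 0 → N i x y = 0))
    (hNmin : ∀ (i : ℕ) (x : Fin (b i)) (y : Fin (b (i + 1))), constantCoeff (N i x y) = 0)
    (hNcx : ∀ i : ℕ, N i * N (i + 1) = 0)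
    -- the morphism of chain complexes of graded S-modules α : F → G
    (A : ∀ i : ℕ, Matrix (Fin (b i)) (Fin (a i)) (MvPolynomial (Fin (r + 1)) k))
    (hAhom : ∀ (i : ℕ) (x : Fin (b i)) (y : Fin (a i)),
      (A i x y).IsHomogeneous ((i : ℤ) - degG i x).toNat
        ∧ ((i : ℤ) - degG i x < 0 → A i x y = 0))
    (hchain : ∀ i : ℕ, A i * M i = N i * A (i + 1))
    -- α_0 is a split monomorphism
    (hsplit0 : ∃ B : Matrix (Fin (a 0)) (Fin (b 0)) (MvPolynomial (Fin (r + 1)) k),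
      B * A 0 = 1) :
    -- then every α_i is a split monomorphism
    ∀ i : ℕ, ∃ B : Matrix (Fin (a i)) (Fin (b i)) (MvPolynomial (Fin (r + 1)) k),
      B * A i = 1 :=
  irredundant_linear_complex_splits_into_minimal_complex_general k r a M hMlin hirr b degG N hNmin A
    hAhom hchain hsplit0
end

section
/- Let P = ⊕_{i≥0} P_i be a finite-dimensional nonnegatively graded module over the exterior algebra E = ⋀V*, let L(P) be the associated standard linear free complex over S = Sym(V), and for each i ≥ 0 set N_i = { p ∈ P_i : ω·p = 0 for all ω ∈ ⋀^i V* }. Let M be a finitely generated graded S-module and G_• a minimal graded free resolution of M. If α_• : L(P) → G_• is a morphism of chain complexes of graded S-modules such that α_0 : S ⊗_k P_0 → G_0 is a split monomorphism, then for every i ≥ 0 the rank of the free module G_i is at least dim_k P_i − dim_k N_i. -/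
open MvPolynomial

variable (k : Type) [Field k] (V : Type) [AddCommGroup V] [Module k V]

/-- The `i`-th exterior power `⋀^i V*`, realized as the `i`-th power of the image of `V*`
inside the exterior algebra `E = ⋀ V*`. -/
noncomputable def wedgePow (i : ℕ) : Submodule k (ExteriorAlgebra k (Module.Dual k V)) :=
  (LinearMap.range (ExteriorAlgebra.ι k (M := Module.Dual k V))) ^ i

variable (P : Type) [AddCommGroup P] [Module k P]
  [Module (ExteriorAlgebra k (Module.Dual k V)) P]
  [IsScalarTower k (ExteriorAlgebra k (Module.Dual k V)) P]
  [SMulCommClass k (ExteriorAlgebra k (Module.Dual k V)) P]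

/-- The subspace `{p ∈ P | ω • p = 0 for all ω ∈ ⋀^i V*}` of an `E = ⋀V*`-module `P`. -/
noncomputable def annWedge (i : ℕ) : Submodule k P where
  carrier := {p : P | ∀ ω ∈ wedgePow k V i, ω • p = 0}
  add_mem' := by
    intro p q hp hq ω hω
    rw [smul_add, hp ω hω, hq ω hω, add_zero]
  zero_mem' := by
    intro ω hω
    rw [smul_zero]
  smul_mem' := by
    intro c p hp ω hω
    rw [← smul_comm c ω p, hp ω hω, smul_zero]

/-!
Reduce `α_i` modulo the irrelevant ideal `𝔪 = (x₁, …, xₙ)` of `S`: this is a `k`-linear map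
`P_i → k^{rank G_i}`, and it suffices that its kernel lies in `N_i`. We show this by induction on
`i`. For `i = 0`, a left inverse of `α_0` survives reduction mod `𝔪`, so the kernel is zero. If
`α_{i+1}(p) ∈ 𝔪 G_{i+1}`, then `∑ⱼ xⱼ α_i(eⱼ p) = d α_{i+1}(p)` lies in `𝔪² G_i`, since the
differential `d` of the minimal resolution has entries in `𝔪`. Comparing linear terms, every
`α_i(eⱼ p)` lies in `𝔪 G_i`; by induction `eⱼ p ∈ N_i` for all `j`, hence `p ∈ N_{i+1}` because
`⋀^{i+1} V* = ⋀^i V* · V*`.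
-/

open Matrix

namespace MvPolynomial

variable {R σ : Type*} [CommSemiring R]

theorem coeff_single_one_mul_eq_zero {f g : MvPolynomial σ R} (hf : constantCoeff f = 0)
    (hg : constantCoeff g = 0) (j : σ) : coeff (Finsupp.single j 1) (f * g) = 0 := by
  classical
  rw [coeff_mul]
  refine Finset.sum_eq_zero fun x hx => ?_
  have hdeg : x.1.degree + x.2.degree = 1 := by
    rw [← map_add, Finset.HasAntidiagonal.mem_antidiagonal.mp hx, Finsupp.degree_single]
  rcases Nat.add_eq_one_iff.mp hdeg with ⟨h1, -⟩ | ⟨-, h2⟩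
  · rw [(Finsupp.degree_eq_zero_iff _).mp h1, ← constantCoeff_eq, hf, zero_mul]
  · rw [(Finsupp.degree_eq_zero_iff _).mp h2, ← constantCoeff_eq, hg, mul_zero]

theorem coeff_single_one_sum_X_mul [Fintype σ] (w : σ → MvPolynomial σ R) (j : σ) :
    coeff (Finsupp.single j 1) (∑ i, X i * w i) = constantCoeff (w j) := by
  classical
  rw [coeff_sum, Finset.sum_eq_single j]
  · rw [coeff_X_mul', if_pos (by simp), tsub_self, constantCoeff_eq]
  · intro i _ hij
    rw [coeff_X_mul', if_neg (by simp [hij])]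
  · simp

theorem constantCoeff_eq_zero_of_mulVec_eq_sum_X_smul {ι κ : Type*} [Fintype σ] [Fintype κ]
    {A : Matrix ι κ (MvPolynomial σ R)} (hA : ∀ x y, constantCoeff (A x y) = 0)
    {v : κ → MvPolynomial σ R} (hv : ∀ y, constantCoeff (v y) = 0)
    {w : σ → ι → MvPolynomial σ R} (h : A *ᵥ v = ∑ j, (X j : MvPolynomial σ R) • w j)
    (j : σ) (l : ι) :
    constantCoeff (w j l) = 0 := by
  have hl : coeff (Finsupp.single j 1) ((A *ᵥ v) l) = constantCoeff (w j l) := by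
    simp only [h, Finset.sum_apply, Pi.smul_apply, smul_eq_mul, coeff_single_one_sum_X_mul]
  rw [← hl, mulVec, dotProduct, coeff_sum]
  exact Finset.sum_eq_zero fun y _ => coeff_single_one_mul_eq_zero (hA l y) (hv y) j

theorem eq_zero_of_constantCoeff_eq_zero_of_mul_eq_one {M ι κ : Type*} [AddCommMonoid M]
    [Module R M] [Fintype ι] [Fintype κ] [DecidableEq κ] (φ : M →ₗ[R] ι → MvPolynomial σ R)
    (β : Module.Basis κ R M) {B : Matrix κ ι (MvPolynomial σ R)}
    (hB : B * Matrix.of (fun l j => φ (β j) l) = 1) {p : M}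
    (hp : ∀ l, constantCoeff (φ p l) = 0) : p = 0 := by
  have hφ : φ p = Matrix.of (fun l j => φ (β j) l) *ᵥ fun j => C (β.repr p j) := by
    nth_rw 1 [← β.sum_repr p]
    refine _root_.funext fun l => ?_
    simp only [map_sum, map_smul, Finset.sum_apply, Pi.smul_apply, smul_eq_C_mul, mulVec,
      dotProduct, of_apply, mul_comm]
  have hrepr : (fun j => C (β.repr p j)) = B *ᵥ φ p := by
    rw [hφ, Matrix.mulVec_mulVec, hB, Matrix.one_mulVec]
  refine β.repr.map_eq_zero_iff.mp (Finsupp.ext fun j => ?_)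
  have hj := congrArg (fun u => constantCoeff (u j)) hrepr
  simp only [constantCoeff_C, RingHom.map_mulVec] at hj
  rw [hj, show constantCoeff ∘ φ p = 0 from _root_.funext hp, Matrix.mulVec_zero]
  rfl

end MvPolynomial

theorem Submodule.finrank_sub_finrank_inf_le {K M W : Type*} [DivisionRing K] [AddCommGroup M]
    [Module K M] [AddCommGroup W] [Module K W] [FiniteDimensional K W] {U L : Submodule K M}
    [FiniteDimensional K U] (φ : U →ₗ[K] W) (hφ : ∀ u, φ u = 0 → (u : M) ∈ L) :
    Module.finrank K U - Module.finrank K (U ⊓ L : Submodule K M) ≤ Module.finrank K W := by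
  have hker : Module.finrank K (LinearMap.ker φ) ≤ Module.finrank K (U ⊓ L : Submodule K M) := by
    rw [← Submodule.map_comap_subtype, Submodule.finrank_map_subtype_eq]
    exact Submodule.finrank_mono fun u hu => hφ u hu
  have hrange := (LinearMap.range φ).finrank_le
  have hrank := φ.finrank_range_add_finrank_ker
  omega

section ExteriorModule

variable {k V P}

theorem mem_annWedge_succ_of_dualBasis {ι : Type*} [Finite ι] [DecidableEq ι]
    (xB : Module.Basis ι k V) {i : ℕ} {p : P}
    (hp : ∀ j, ExteriorAlgebra.ι k (xB.dualBasis j) • p ∈ annWedge k V P i) :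
    p ∈ annWedge k V P (i + 1) := by
  have hspan : Submodule.span k (Set.range xB.dualBasis) ≤
      (annWedge k V P i).comap ((ExteriorAlgebra.ι k).smulRight p) :=
    Submodule.span_le.mpr (Set.range_subset_iff.mpr hp)
  have hιp (e : Module.Dual k V) : ExteriorAlgebra.ι k e • p ∈ annWedge k V P i :=
    hspan (xB.dualBasis.mem_span e)
  intro ω hω
  rw [wedgePow, pow_succ] at hω
  refine Submodule.mul_induction_on hω ?_ fun x y hx hy => by rw [add_smul, hx, hy, add_zero]
  rintro m hm _ ⟨e, rfl⟩
  rw [mul_smul]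
  exact hιp e m hm

theorem mem_annWedge_of_constantCoeff_eq_zero [FiniteDimensional k P]
    {n : ℕ} (xB : Module.Basis (Fin n) k V) {Pgr : ℕ → Submodule k P}
    (hact : ∀ (i : ℕ) (e : Module.Dual k V), ∀ p ∈ Pgr (i + 1),
      ExteriorAlgebra.ι k e • p ∈ Pgr i)
    {b : ℕ → ℕ} {N : ∀ i : ℕ, Matrix (Fin (b i)) (Fin (b (i + 1))) (MvPolynomial (Fin n) k)}
    (hNmin : ∀ (i : ℕ) (x : Fin (b i)) (y : Fin (b (i + 1))), constantCoeff (N i x y) = 0)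
    {αk : ∀ i : ℕ, Pgr i →ₗ[k] (Fin (b i) → MvPolynomial (Fin n) k)}
    (hαchain : ∀ (i : ℕ) (p : Pgr (i + 1)),
      (N i).mulVec (αk (i + 1) p)
        = ∑ j : Fin n, (MvPolynomial.X j : MvPolynomial (Fin n) k) •
            αk i ⟨ExteriorAlgebra.ι k (xB.dualBasis j) • (p : P),
              hact i (xB.dualBasis j) (p : P) p.2⟩)
    (hsplit0 : ∃ B : Matrix (Fin (Module.finrank k (Pgr 0))) (Fin (b 0))
        (MvPolynomial (Fin n) k),
      B * (Matrix.of fun (l : Fin (b 0)) (j : Fin (Module.finrank k (Pgr 0))) =>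
        αk 0 (Module.finBasis k (Pgr 0) j) l) = 1) :
    ∀ (i : ℕ) (p : Pgr i), (∀ l, constantCoeff (αk i p l) = 0) → (p : P) ∈ annWedge k V P i
  | 0, p, hp => by
    obtain ⟨B, hB⟩ := hsplit0
    rw [eq_zero_of_constantCoeff_eq_zero_of_mul_eq_one (αk 0) (Module.finBasis k (Pgr 0)) hB hp]
    exact zero_mem _
  | i + 1, p, hp =>
    mem_annWedge_succ_of_dualBasis xB fun j =>
      mem_annWedge_of_constantCoeff_eq_zero xB hact hNmin hαchain hsplit0 i _
        (constantCoeff_eq_zero_of_mulVec_eq_sum_X_smul (hNmin i) hp (hαchain i p) j)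

end ExteriorModule

theorem rank_of_minimal_resolution_ge_irredundant_quotient
    [FiniteDimensional k P]
    (n : ℕ) (xB : Module.Basis (Fin n) k V)
    (Pgr : ℕ → Submodule k P)
    (hact : ∀ (i : ℕ) (e : Module.Dual k V), ∀ p ∈ Pgr (i + 1),
      ExteriorAlgebra.ι k e • p ∈ Pgr i)
    -- the minimal graded free resolution G
    (b : ℕ → ℕ)
    (N : ∀ i : ℕ, Matrix (Fin (b i)) (Fin (b (i + 1))) (MvPolynomial (Fin n) k))
    (hNmin : ∀ (i : ℕ) (x : Fin (b i)) (y : Fin (b (i + 1))), constantCoeff (N i x y) = 0)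
    -- the morphism of chain complexes of graded S-modules α : L(P) → G
    (αk : ∀ i : ℕ, Pgr i →ₗ[k] (Fin (b i) → MvPolynomial (Fin n) k))
    (hαchain : ∀ (i : ℕ) (p : Pgr (i + 1)),
      (N i).mulVec (αk (i + 1) p)
        = ∑ j : Fin n, (MvPolynomial.X j : MvPolynomial (Fin n) k) •
            αk i ⟨ExteriorAlgebra.ι k (xB.dualBasis j) • (p : P),
              hact i (xB.dualBasis j) (p : P) p.2⟩)
    -- α_0 is a split monomorphism
    (hsplit0 : ∃ B : Matrix (Fin (Module.finrank k (Pgr 0))) (Fin (b 0))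
        (MvPolynomial (Fin n) k),
      B * (Matrix.of fun (l : Fin (b 0)) (j : Fin (Module.finrank k (Pgr 0))) =>
        αk 0 (Module.finBasis k (Pgr 0) j) l) = 1) :
    ∀ i : ℕ,
      Module.finrank k (Pgr i) - Module.finrank k (Pgr i ⊓ annWedge k V P i : Submodule k P)
        ≤ b i := by
  intro i
  have hbound := Submodule.finrank_sub_finrank_inf_le ((lcoeff k 0).compLeft (Fin (b i)) ∘ₗ αk i)
    fun p hp => mem_annWedge_of_constantCoeff_eq_zero xB hact hNmin hαchain hsplit0 i p
      fun l => congrFun hp l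
  rwa [Module.finrank_fin_fun] at hbound
end

section
/- Let R = ⊕_{n≥0} R_n be a commutative graded ring generated as an algebra over R_0 by its degree-one part R_1, and let M = ⊕_{n≥0} M_n be a graded R-module generated by M_0, i.e., M_{n+1} = R_1·M_n for all n ≥ 0. Let R′ ⊆ R be a graded subring such that R′_1·M_0 = M_1. Then R′_1·M_n = M_{n+1} for all n ≥ 0; in particular, M is generated by M_0 as an R′-module. -/
/-- Let `A = ⊕_{n ≥ 0} 𝒜 n` be a commutative graded ring generated over
`𝒜 0` by its degree-one part (`𝒜 (n+1) = 𝒜 1 * 𝒜 n`), and `M = ⊕_{n ≥ 0} ℳ n` a graded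
`A`-module generated by `ℳ 0`, i.e. `ℳ (n+1) = 𝒜 1 · ℳ n` for all `n`.  Let `ℛ` be a
graded subring of `A` (given by its graded pieces `ℛ n ≤ 𝒜 n`) such that
`ℛ 1 · ℳ 0 = ℳ 1`.  Then `ℛ 1 · ℳ n = ℳ (n+1)` for all `n ≥ 0`; in particular `M` is
generated by `ℳ 0` as an `ℛ`-module.  Here `X · ℳ n` denotes the additive subgroup
(equivalently, `ℤ`-submodule) generated by the products `a • m`, `a ∈ X`, `m ∈ ℳ n`. -/
theorem commutative_graded_rigidity
    (A : Type) [CommRing A] (𝒜 : ℕ → Submodule ℤ A) [GradedRing 𝒜]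
    (hAgen : ∀ n : ℕ, 𝒜 (n + 1) = 𝒜 1 * 𝒜 n)
    (M : Type) [AddCommGroup M] [Module A M]
    (ℳ : ℕ → Submodule ℤ M) [DirectSum.Decomposition ℳ]
    (hsmul : ∀ (i j : ℕ), ∀ a ∈ 𝒜 i, ∀ m ∈ ℳ j, a • m ∈ ℳ (i + j))
    (hMgen : ∀ n : ℕ, ℳ (n + 1) =
      Submodule.span ℤ {x : M | ∃ a ∈ 𝒜 1, ∃ m ∈ ℳ n, x = a • m})
    (ℛ : ℕ → Submodule ℤ A)
    (hsub : ∀ n : ℕ, ℛ n ≤ 𝒜 n)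
    (hone : (1 : A) ∈ ℛ 0)
    (hmul : ∀ i j : ℕ, ℛ i * ℛ j ≤ ℛ (i + j))
    (hR1 : Submodule.span ℤ {x : M | ∃ a ∈ ℛ 1, ∃ m ∈ ℳ 0, x = a • m} = ℳ 1) :
    ∀ n : ℕ, Submodule.span ℤ {x : M | ∃ a ∈ ℛ 1, ∃ m ∈ ℳ n, x = a • m} = ℳ (n + 1) := by

  intro n
  induction n with
  | zero => exact hR1
  | succ n ih =>
    apply le_antisymm
    · rw [Submodule.span_le]
      rintro x ⟨a, ha, m, hm, rfl⟩
      have := hsmul 1 (n + 1) a (hsub 1 ha) m hm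
      simpa [Nat.add_comm] using this
    · rw [hMgen (n + 1), Submodule.span_le]
      rintro x ⟨a, ha, m, hm, rfl⟩
      rw [← ih] at hm
      refine Submodule.span_induction
        (p := fun m _ => a • m ∈ Submodule.span ℤ
          {x : M | ∃ r ∈ ℛ 1, ∃ m' ∈ ℳ (n + 1), x = r • m'}) ?_ ?_ ?_ ?_ hm
      · rintro y ⟨r, hr, m', hm', rfl⟩
        have key : a • r • m' = r • a • m' := by
          rw [smul_smul, smul_smul, mul_comm]
        rw [key]
        have han : a • m' ∈ ℳ (n + 1) := by
          have := hsmul 1 n a ha m' hm'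
          simpa [Nat.add_comm] using this
        exact Submodule.subset_span ⟨r, hr, a • m', han, rfl⟩
      · simpa using Submodule.zero_mem _
      · intro y z _ _ hy hz
        rw [smul_add]; exact Submodule.add_mem _ hy hz
      · intro c y _ hy
        rw [smul_comm]; exact Submodule.smul_mem _ c hy
end

section
/- Let k be a field, V a finite-dimensional k-vector space, W ⊆ V a subspace, and let ⋀W ⊆ ⋀V be the subalgebra of the exterior algebra of V generated by W. Let N = ⊕_{n≥0} N_n be a graded ⋀V-module (so v·N_n ⊆ N_{n+1} for every v ∈ V) which is generated by N_0, i.e., N_{n+1} = V·N_n for all n ≥ 0. If W·N_0 = N_1, then W·N_n = N_{n+1} for all n ≥ 0; in particular, N is generated by N_0 as a ⋀W-module. -/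
/-- Let `V` be a finite-dimensional `k`-vector space, `W ⊆ V` a subspace,
and `N = ⊕_{n ≥ 0} N_n` a graded `⋀V`-module (so `v • N_n ⊆ N_{n+1}` for `v ∈ V`) which is
generated by `N_0`, i.e. `N_{n+1} = V·N_n` for all `n ≥ 0`.  If `W·N_0 = N_1`, then
`W·N_n = N_{n+1}` for all `n ≥ 0` (so `N` is generated by `N_0` over `⋀W`).  Here `W·N_n`
denotes the `k`-linear span of the products `w • m` for `w ∈ W`, `m ∈ N_n`, the action
being via the inclusion `ι` of `V` in degree one of the exterior algebra. -/
theorem exterior_rigidity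
    (k : Type) [Field k] (V : Type) [AddCommGroup V] [Module k V] [FiniteDimensional k V]
    (W : Submodule k V)
    (N : Type) [AddCommGroup N] [Module k N]
    [Module (ExteriorAlgebra k V) N] [IsScalarTower k (ExteriorAlgebra k V) N]
    (Ngr : ℕ → Submodule k N)
    (hdirect : DirectSum.IsInternal Ngr)
    (hact : ∀ (n : ℕ) (v : V), ∀ m ∈ Ngr n, ExteriorAlgebra.ι k v • m ∈ Ngr (n + 1))
    (hgen : ∀ n : ℕ, Ngr (n + 1) =
      Submodule.span k {x : N | ∃ v : V, ∃ m ∈ Ngr n, x = ExteriorAlgebra.ι k v • m})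
    (hW : Submodule.span k
        {x : N | ∃ v ∈ W, ∃ m ∈ Ngr 0, x = ExteriorAlgebra.ι k v • m} = Ngr 1) :
    ∀ n : ℕ, Submodule.span k
        {x : N | ∃ v ∈ W, ∃ m ∈ Ngr n, x = ExteriorAlgebra.ι k v • m} = Ngr (n + 1) := by
  intro n
  induction n with
  | zero => exact hW
  | succ n ih =>
    apply le_antisymm
    · rw [Submodule.span_le]
      rintro x ⟨v, hv, m, hm, rfl⟩
      exact hact _ v m hm
    · rw [hgen (n + 1), Submodule.span_le]
      rintro x ⟨v, m, hm, rfl⟩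
      rw [← ih] at hm
      induction hm using Submodule.span_induction with
      | mem m hmem =>
        obtain ⟨w, hw, m', hm', rfl⟩ := hmem
        have key : ExteriorAlgebra.ι k v • ExteriorAlgebra.ι k w • m'
            = -(ExteriorAlgebra.ι k w • ExteriorAlgebra.ι k v • m') := by
          rw [smul_smul, smul_smul, ← neg_smul]
          congr 1
          exact eq_neg_of_add_eq_zero_left (ExteriorAlgebra.ι_add_mul_swap (R := k) v w)
        rw [key]
        exact Submodule.neg_mem _ (Submodule.subset_span
          ⟨w, hw, _, hact n v m' hm', rfl⟩)
      | zero => simp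
      | add a b _ _ ha hb => rw [smul_add]; exact Submodule.add_mem _ ha hb
      | smul c a _ ha => rw [smul_comm]; exact Submodule.smul_mem _ c ha
end

section
/- Let P = ⊕_{i≥0} P_i be a nonnegatively graded module over the exterior algebra E = ⋀V*, and for each i ≥ 0 set N_i = { p ∈ P_i : ω·p = 0 for all ω ∈ ⋀^i V* }. Then: (1) N = ⊕_{i≥0} N_i is a graded E-submodule of P with N_0 = 0; (2) the quotient P/N has the property that for every i ≥ 1, any class p̄ ∈ (P/N)_i with ω·p̄ = 0 for all ω ∈ ⋀^i V* is zero; and (3) N is contained in every graded E-submodule N′ ⊆ P such that P/N′ has the property in (2). -/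
/-!
Two facts carry the proof. Since `1 ∈ ⋀^0 V*`, nothing nonzero is killed by `⋀^0 V*`, so
`N_0 = 0`. And because the `P_j` are independent, a graded `N' = ⨆ N'_j` with `N'_j ≤ P_j`
meets `P_i` exactly in `N'_i` (modular law). For (2): for `p ∈ P_i` and `ω ∈ ⋀^i V*` the
element `ω • p` has degree `0`, so `ω • p ∈ N` forces `ω • p = 0`. For (3): an element of
`N_i` has zero class in `P/N'`, so it lies in `N'`, hence in `N'_i`.
-/

variable (k : Type) [Field k] (V : Type) [AddCommGroup V] [Module k V] [FiniteDimensional k V]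

variable (P : Type) [AddCommGroup P] [Module k P]
  [Module (ExteriorAlgebra k (Module.Dual k V)) P]
  [IsScalarTower k (ExteriorAlgebra k (Module.Dual k V)) P]
  [SMulCommClass k (ExteriorAlgebra k (Module.Dual k V)) P]

theorem iSupIndep.iSup_inf_eq_of_le {ι α : Type*} [CompleteLattice α] [IsModularLattice α]
    {a b : ι → α} (ha : iSupIndep a) (hba : ∀ j, b j ≤ a j) (i : ι) :
    (⨆ j, b j) ⊓ a i = b i := by
  have hrest : (⨆ (j) (_ : j ≠ i), b j) ⊓ a i = ⊥ :=
    ((ha i).symm.mono_left (iSup₂_mono fun j _ => hba j)).eq_bot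
  rw [iSup_split_single b i, sup_inf_assoc_of_le _ (hba i), hrest, sup_bot_eq]

section ExteriorAction

variable {k V P}

omit [FiniteDimensional k V]

theorem one_mem_wedgePow_zero : (1 : ExteriorAlgebra k (Module.Dual k V)) ∈ wedgePow k V 0 := by
  rw [wedgePow, pow_zero]
  exact Submodule.one_le.mp le_rfl

theorem mul_ι_mem_wedgePow_succ {i : ℕ} {ω : ExteriorAlgebra k (Module.Dual k V)}
    (hω : ω ∈ wedgePow k V i) (e : Module.Dual k V) :
    ω * ExteriorAlgebra.ι k e ∈ wedgePow k V (i + 1) := by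
  rw [wedgePow, pow_succ]
  exact Submodule.mul_mem_mul hω ⟨e, rfl⟩

omit [IsScalarTower k (ExteriorAlgebra k (Module.Dual k V)) P] in
theorem annWedge_zero : annWedge k V P 0 = ⊥ :=
  eq_bot_iff.mpr fun p hp => by simpa using hp 1 one_mem_wedgePow_zero

omit [IsScalarTower k (ExteriorAlgebra k (Module.Dual k V)) P] in
theorem ι_smul_mem_annWedge {i : ℕ} {p : P} (hp : p ∈ annWedge k V P (i + 1))
    (e : Module.Dual k V) : ExteriorAlgebra.ι k e • p ∈ annWedge k V P i := fun ω hω => by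
  rw [← mul_smul]
  exact hp _ (mul_ι_mem_wedgePow_succ hω e)

omit [SMulCommClass k (ExteriorAlgebra k (Module.Dual k V)) P] in
theorem smul_mem_of_mem_wedgePow {Pgr : ℕ → Submodule k P}
    (hact : ∀ (i : ℕ) (e : Module.Dual k V), ∀ p ∈ Pgr (i + 1),
      ExteriorAlgebra.ι k e • p ∈ Pgr i) :
    ∀ {j : ℕ} (i : ℕ) {ω}, ω ∈ wedgePow k V j → ∀ {p}, p ∈ Pgr (i + j) → ω • p ∈ Pgr i
  | 0, i, ω, hω, p, hp => by
    rw [wedgePow, pow_zero, Submodule.one_eq_span] at hω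
    obtain ⟨c, rfl⟩ := Submodule.mem_span_singleton.mp hω
    rw [smul_assoc, one_smul]
    exact (Pgr i).smul_mem c hp
  | j + 1, i, ω, hω, p, hp => by
    rw [wedgePow, pow_succ] at hω
    refine Submodule.mul_induction_on hω ?_ fun x y hx hy => ?_
    · rintro a ha _ ⟨e, rfl⟩
      rw [mul_smul]
      exact smul_mem_of_mem_wedgePow hact i ha (hact (i + j) e p hp)
    · rw [add_smul]
      exact add_mem hx hy

end ExteriorAction

theorem maximal_irredundant_quotient
    (Pgr : ℕ → Submodule k P)
    (hdirect : DirectSum.IsInternal Pgr)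
    (hact : ∀ (i : ℕ) (e : Module.Dual k V), ∀ p ∈ Pgr (i + 1),
      ExteriorAlgebra.ι k e • p ∈ Pgr i) :
    -- (1) `N` is a graded `E`-submodule with `N_0 = 0`
    (Pgr 0 ⊓ annWedge k V P 0 = ⊥)
    ∧ (∀ (i : ℕ) (e : Module.Dual k V), ∀ p ∈ Pgr (i + 1) ⊓ annWedge k V P (i + 1),
        ExteriorAlgebra.ι k e • p ∈ Pgr i ⊓ annWedge k V P i)
    -- (2) the quotient `P/N` is irredundant
    ∧ (∀ i : ℕ, 1 ≤ i → ∀ p ∈ Pgr i,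
        (∀ ω ∈ wedgePow k V i, ω • p ∈ ⨆ j : ℕ, Pgr j ⊓ annWedge k V P j) →
        p ∈ ⨆ j : ℕ, Pgr j ⊓ annWedge k V P j)
    -- (3) `N` is the smallest graded `E`-submodule with irredundant quotient
    ∧ (∀ Ngr' : ℕ → Submodule k P,
        (∀ i : ℕ, Ngr' i ≤ Pgr i) →
        (∀ (i : ℕ) (e : Module.Dual k V), ∀ p ∈ Ngr' (i + 1),
          ExteriorAlgebra.ι k e • p ∈ Ngr' i) →
        (∀ i : ℕ, 1 ≤ i → ∀ p ∈ Pgr i,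
          (∀ ω ∈ wedgePow k V i, ω • p ∈ ⨆ j : ℕ, Ngr' j) → p ∈ ⨆ j : ℕ, Ngr' j) →
        ∀ i : ℕ, Pgr i ⊓ annWedge k V P i ≤ Ngr' i) := by
  have hind := hdirect.submodule_iSupIndep
  have hN₀ : Pgr 0 ⊓ annWedge k V P 0 = ⊥ := by rw [annWedge_zero, inf_bot_eq]
  refine ⟨hN₀, fun i e p hp => ⟨hact i e p hp.1, ι_smul_mem_annWedge hp.2 e⟩, ?_, ?_⟩
  · intro i _ p hp hker
    refine Submodule.mem_iSup_of_mem i ⟨hp, fun ω hω => ?_⟩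
    have hdeg : ω • p ∈ Pgr 0 := smul_mem_of_mem_wedgePow hact 0 hω (by rwa [zero_add])
    have hN : ω • p ∈ (⨆ j, Pgr j ⊓ annWedge k V P j) ⊓ Pgr 0 := ⟨hker ω hω, hdeg⟩
    rw [hind.iSup_inf_eq_of_le (fun j => inf_le_left) 0, hN₀] at hN
    exact hN
  · rintro Ngr' hle - hirr (_ | i) p ⟨hp, hann⟩
    · rw [annWedge_zero] at hann
      rw [(Submodule.mem_bot k).mp hann]
      exact zero_mem _
    · have hN' : p ∈ (⨆ j, Ngr' j) ⊓ Pgr (i + 1) :=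
        ⟨hirr (i + 1) i.succ_pos p hp fun ω hω => by rw [hann ω hω]; exact zero_mem _, hp⟩
      rwa [hind.iSup_inf_eq_of_le hle] at hN'
end

section
/- Let s ≥ 3 and δ ≥ 0 be integers, set r = s(s+1)/2 + δ and γ = r + s + 2, and let b_j denote the coefficient of t^j in the polynomial B(t) = (1−t)^{r+1}(1 + (r+1)t) + γ·t²·(1−t)^r. Then (−1)^{r−s}·b_{r−s+2} = ((2δ + 4 − s² + s)/(s² − s + 2δ + 4))·C(r, s) as rational numbers, where C(r,s) is the binomial coefficient 'r choose s'. -/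
/-!
Expanding `B` with `(1 - t)^n = ∑ (-1)^k C(n, k) t^k`, the coefficient `(-1)^(r-s) b_(r-s+2)` is
`C(r+1, s-1) - (r+1) C(r+1, s) + γ C(r, s)`. Both binomials are rational multiples of `C(r, s)`,
and for `γ = r + s + 2` the sum collapses to `(r + 2 - s²) / (r - s + 2) · C(r, s)`; doubling
numerator and denominator and substituting `2r = s² + s + 2δ` gives the stated quotient.
-/

open Polynomial

theorem Polynomial.coeff_one_sub_X_pow {R : Type*} [CommRing R] (n k : ℕ) :
    ((1 - X : R[X]) ^ n).coeff k = (-1) ^ k * n.choose k := by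
  have hcomp : (1 - X : R[X]) ^ n = ((1 + X) ^ n).comp (C (-1) * X) := by
    simp [sub_eq_add_neg]
  rw [hcomp, comp_C_mul_X_coeff, coeff_one_add_X_pow, mul_comm]

theorem Polynomial.neg_one_pow_mul_coeff_add_two {R : Type*} [CommRing R] (n k : ℕ) (c g : R) :
    (-1) ^ k * ((1 - X) ^ (n + 1) * (1 + C c * X) + C g * X ^ 2 * (1 - X) ^ n).coeff (k + 2)
      = (n + 1).choose (k + 2) - c * (n + 1).choose (k + 1) + g * n.choose k := by
  have hsplit : (1 - X : R[X]) ^ (n + 1) * (1 + C c * X) + C g * X ^ 2 * (1 - X) ^ n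
      = (1 - X) ^ (n + 1) + C c * ((1 - X) ^ (n + 1) * X) + C g * (X ^ 2 * (1 - X) ^ n) := by
    ring
  have hsign : ((-1) ^ k * (-1) ^ k : R) = 1 := by rw [← mul_pow]; simp
  rw [hsplit, coeff_add, coeff_add, coeff_C_mul, coeff_C_mul, coeff_mul_X, coeff_X_pow_mul,
    coeff_one_sub_X_pow, coeff_one_sub_X_pow, coeff_one_sub_X_pow]
  linear_combination
    ((n + 1).choose (k + 2) - c * (n + 1).choose (k + 1) + g * n.choose k : R) * hsign

theorem Nat.add_one_mul_choose_add_add_one (k s : ℕ) :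
    (k + 1) * (k + s + 1).choose (k + 1) = (k + s + 1) * (k + s).choose s := by
  rw [← Nat.choose_symm_add, Nat.add_one_mul_choose_eq, mul_comm]

theorem Nat.add_one_mul_add_two_mul_choose_add_add_two (k s : ℕ) :
    (k + 1) * (k + 2) * (k + s + 1).choose (k + 2) = (k + s + 1) * s * (k + s).choose s := by
  have hshift := Nat.choose_succ_right_eq (k + s) k
  rw [Nat.add_sub_cancel_left, Nat.choose_symm_add] at hshift
  rw [mul_assoc, mul_comm (k + 2), ← Nat.add_one_mul_choose_eq, mul_left_comm, mul_comm (k + 1),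
    hshift, mul_assoc, mul_comm s]

theorem neg_one_pow_mul_coeff_hilbertNumerator {s r : ℕ} (hsr : s ≤ r) :
    (-1 : ℚ) ^ (r - s) * ((1 - X) ^ (r + 1) * (1 + C ((r : ℚ) + 1) * X)
        + C ((r : ℚ) + s + 2) * X ^ 2 * (1 - X) ^ r).coeff (r - s + 2)
      = (r + 2 - s ^ 2) / (r - s + 2) * r.choose s := by
  obtain ⟨k, rfl⟩ := Nat.exists_eq_add_of_le' hsr
  have h1 : ((k + 1) * (k + s + 1).choose (k + 1) : ℚ) = (k + s + 1) * (k + s).choose s := by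
    exact_mod_cast Nat.add_one_mul_choose_add_add_one k s
  have h2 : ((k + 1) * (k + 2) * (k + s + 1).choose (k + 2) : ℚ)
      = (k + s + 1) * s * (k + s).choose s := by
    exact_mod_cast Nat.add_one_mul_add_two_mul_choose_add_add_two k s
  rw [Nat.add_sub_cancel, neg_one_pow_mul_coeff_add_two, Nat.choose_symm_add]
  push_cast
  rw [add_sub_cancel_right, div_mul_eq_mul_div, eq_div_iff (by positivity)]
  refine mul_left_cancel₀ (by positivity : (k + 1 : ℚ) ≠ 0) ?_
  linear_combination h2 - (k + s + 1 : ℚ) * (k + 2) * h1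

theorem minimal_resolution_conjecture_points_hilbert_coefficient_general
    (s δ r γ : ℕ) (hr : r = s * (s + 1) / 2 + δ) (hγ : γ = r + s + 2)
    (B : Polynomial ℚ)
    (hB : B = (1 - Polynomial.X) ^ (r + 1) * (1 + Polynomial.C ((r : ℚ) + 1) * Polynomial.X)
        + Polynomial.C (γ : ℚ) * Polynomial.X ^ 2 * (1 - Polynomial.X) ^ r) :
    (-1 : ℚ) ^ (r - s) * B.coeff (r - s + 2)
      = ((2 * (δ : ℚ) + 4 - (s : ℚ) ^ 2 + s) / ((s : ℚ) ^ 2 - s + 2 * δ + 4))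
          * (r.choose s : ℚ) := by
  have h2r : 2 * r = s * (s + 1) + 2 * δ := by
    rw [hr, mul_add, Nat.two_mul_div_two_of_even (Nat.even_mul_succ_self s)]
  have hsr : s ≤ r := by nlinarith
  have h2rq : 2 * (r : ℚ) = s * (s + 1) + 2 * δ := by exact_mod_cast h2r
  have hnum : 2 * (δ : ℚ) + 4 - s ^ 2 + s = 2 * (r + 2 - s ^ 2) := by linear_combination -h2rq
  have hden : (s : ℚ) ^ 2 - s + 2 * δ + 4 = 2 * (r - s + 2) := by linear_combination -h2rq
  rw [hB, hγ, Nat.cast_add, Nat.cast_add, Nat.cast_two, neg_one_pow_mul_coeff_hilbertNumerator hsr,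
    hnum, hden, mul_div_mul_left _ _ two_ne_zero]

/-- Let `s ≥ 3` and `δ ≥ 0` be integers, set `r = s(s+1)/2 + δ` and
`γ = r + s + 2`, and let `b j` denote the coefficient of `t^j` in the polynomial
`B(t) = (1-t)^(r+1) * (1 + (r+1)t) + γ t² (1-t)^r`.  Then
`(-1)^(r-s) * b_(r-s+2) = ((2δ + 4 - s² + s)/(s² - s + 2δ + 4)) * (r choose s)`
as rational numbers. -/
theorem minimal_resolution_conjecture_points_hilbert_coefficient
    (s δ r γ : ℕ) (hs : 3 ≤ s) (hr : r = s * (s + 1) / 2 + δ) (hγ : γ = r + s + 2)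
    (B : Polynomial ℚ)
    (hB : B = (1 - Polynomial.X) ^ (r + 1) * (1 + Polynomial.C ((r : ℚ) + 1) * Polynomial.X)
        + Polynomial.C (γ : ℚ) * Polynomial.X ^ 2 * (1 - Polynomial.X) ^ r) :
    (-1 : ℚ) ^ (r - s) * B.coeff (r - s + 2)
      = ((2 * (δ : ℚ) + 4 - (s : ℚ) ^ 2 + s) / ((s : ℚ) ^ 2 - s + 2 * δ + 4))
          * (r.choose s : ℚ) :=
  minimal_resolution_conjecture_points_hilbert_coefficient_general s δ r γ hr hγ B hB
end

section
/- Let g and d be integers with g ≥ 2 and d ≥ 2g + 2, let H(t) = 1 + Σ_{n≥1} (nd + 1 − g)·t^n as a formal power series over ℚ, and let b_j denote the coefficient of t^j in B(t) = (1−t)^{d−g+1}·H(t). Then (−1)^{d−2g}·b_{d−2g+2} = ((d − g² + g)/(d − 2g + 2))·C(d−g−1, g−1) as rational numbers, where C(d−g−1, g−1) is the binomial coefficient 'd−g−1 choose g−1'. -/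
/-!
The Hilbert function `n ↦ nd + 1 - g` is affine for `n ≥ 1`, so its second difference vanishes
and `(1 - t)² H(t) = 1 + (d - g - 1) t + g t²` (the h-vector of the curve). Hence
`B(t) = (1 - t)^(d-g-1) (1 + (d - g - 1) t + g t²)`, whose coefficients are three-term
combinations of signed binomial coefficients; the relation `C(m, k+1) (k+1) = C(m, k) (m - k)`
reduces the combination in degree `d - 2g + 2` to a multiple of `C(d - g - 1, g - 1)`.
-/

open PowerSeries

namespace PowerSeries

variable {R : Type*} [CommRing R]

theorem coeff_one_sub_X_pow (m n : ℕ) :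
    coeff n ((1 - X : R⟦X⟧) ^ m) = (-1) ^ n * m.choose n := by
  have h : (1 - X : R⟦X⟧) ^ m =
      rescale (-1) (((1 + Polynomial.X) ^ m : Polynomial R) : R⟦X⟧) := by
    simp [rescale_X, sub_eq_add_neg]
  rw [h, coeff_rescale, Polynomial.coeff_coe, Polynomial.coeff_one_add_X_pow]

theorem coeff_add_two_one_sub_X_pow_mul_quadratic (m n : ℕ) (u v : R) :
    coeff (n + 2) ((1 - X : R⟦X⟧) ^ m * (1 + C u * X + C v * X ^ 2)) =
      (-1) ^ n * (m.choose (n + 2) - u * m.choose (n + 1) + v * m.choose n) := by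
  have h : (1 - X : R⟦X⟧) ^ m * (1 + C u * X + C v * X ^ 2) =
      (1 - X) ^ m + C u * ((1 - X) ^ m * X ^ 1) + C v * ((1 - X) ^ m * X ^ 2) := by ring
  rw [h, map_add, map_add, coeff_C_mul, coeff_C_mul, coeff_mul_X_pow', coeff_mul_X_pow',
    if_pos (by omega), if_pos (by omega), Nat.add_sub_cancel, show n + 2 - 1 = n + 1 by omega,
    coeff_one_sub_X_pow, coeff_one_sub_X_pow, coeff_one_sub_X_pow]
  ring

theorem one_sub_X_sq_mul_mk_affine (d c : R) :
    (1 - X : R⟦X⟧) ^ 2 * mk (fun n => if n = 0 then 1 else n * d + c) =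
      1 + C (d + c - 2) * X + C (1 - c) * X ^ 2 := by
  rw [show (1 - X : R⟦X⟧) ^ 2 = 1 - C 2 * X ^ 1 + X ^ 2 by rw [map_ofNat]; ring]
  ext n
  rw [add_mul, sub_mul, one_mul, mul_assoc, map_add, map_sub, coeff_C_mul, coeff_X_pow_mul',
    coeff_X_pow_mul', map_add, map_add, coeff_C_mul, coeff_C_mul, coeff_one, coeff_X, coeff_X_pow]
  rcases n with _ | _ | _ | n <;> grind [coeff_mk]

end PowerSeries

theorem Nat.cast_choose_add_two_sub_mul_choose_add_one (j a : ℕ) :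
    ((j + a).choose (j + 2) : ℚ) - (j + a) * (j + a).choose (j + 1) + (a + 1) * (j + a).choose j
      = (j + 2 + a - a ^ 2) / (j + 2) * (j + a).choose j := by
  have h₁ : ((j + a).choose (j + 1) : ℚ) * (j + 1) = (j + a).choose j * a := by
    have := (j + a).choose_succ_right_eq j
    rw [Nat.add_sub_cancel_left] at this
    exact_mod_cast this
  have h₂ : ((j + a).choose (j + 2) : ℚ) * (j + 2) = (j + a).choose (j + 1) * (a - 1) := by
    rcases a with _ | b
    · simp [Nat.choose_eq_zero_of_lt]
    · have := (j + (b + 1)).choose_succ_right_eq (j + 1)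
      rw [show j + (b + 1) - (j + 1) = b by omega] at this
      push_cast
      rw [add_sub_cancel_right]
      exact_mod_cast this
  field_simp
  linear_combination h₂ - (j + 1 + a : ℚ) * h₁

/-- Let `g ≥ 2` and `d ≥ 2g + 2` be integers, let
`H(t) = 1 + ∑_{n ≥ 1} (nd + 1 - g) tⁿ` as a formal power series over `ℚ`, and let `b j`
denote the coefficient of `t^j` in `B(t) = (1-t)^(d-g+1) * H(t)`.  Then
`(-1)^(d-2g) * b_(d-2g+2) = ((d - g² + g)/(d - 2g + 2)) * C(d-g-1, g-1)`
as rational numbers. -/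
theorem minimal_resolution_conjecture_curves_hilbert_coefficient
    (g d : ℕ) (hg : 2 ≤ g) (hd : 2 * g + 2 ≤ d)
    (H B : PowerSeries ℚ)
    (hH : H = PowerSeries.mk fun n => if n = 0 then 1 else (n : ℚ) * d + 1 - g)
    (hB : B = (1 - PowerSeries.X) ^ (d - g + 1) * H) :
    (-1 : ℚ) ^ (d - 2 * g) * PowerSeries.coeff (R := ℚ) (d - 2 * g + 2) B
      = (((d : ℚ) - (g : ℚ) ^ 2 + g) / ((d : ℚ) - 2 * g + 2))
          * ((d - g - 1).choose (g - 1) : ℚ) := by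
  obtain ⟨a, rfl⟩ : ∃ a, g = a + 1 := ⟨g - 1, by omega⟩
  obtain ⟨j, rfl⟩ : ∃ j, d = j + 2 * (a + 1) := ⟨d - 2 * (a + 1), by omega⟩
  have hj : j + 2 * (a + 1) - 2 * (a + 1) = j := by omega
  have hm : j + 2 * (a + 1) - (a + 1) - 1 = j + a := by omega
  have hHilb : (1 - X) ^ 2 * H = 1 + C ((j + a : ℕ) : ℚ) * X + C ((a + 1 : ℕ) : ℚ) * X ^ 2 := by
    simp_rw [hH, add_sub_assoc, one_sub_X_sq_mul_mk_affine]
    push_cast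
    ring_nf
  have hB' : B = (1 - X) ^ (j + a) * ((1 - X) ^ 2 * H) := by
    rw [hB, ← mul_assoc, ← pow_add, show j + 2 * (a + 1) - (a + 1) + 1 = j + a + 2 by omega]
  rw [hB', hHilb, hj, hm, coeff_add_two_one_sub_X_pow_mul_quadratic, ← mul_assoc, ← pow_add,
    Even.neg_one_pow ⟨j, rfl⟩, one_mul, Nat.add_sub_cancel, ← Nat.choose_symm_add]
  push_cast
  rw [Nat.cast_choose_add_two_sub_mul_choose_add_one]
  congr 1
  ring
end

section
/- Let s ≥ 3 and δ be integers with δ ≥ s(s−1)/2 − 1, and set r = s(s+1)/2 + δ. Then the inequality of rational numbers C(s+δ, δ) > ((2δ + 4 − s² + s)/(s² − s + 2δ + 4))·C(r, s) holds if and only if (s, δ) = (3, 2) or (s, δ) = (4, 5), where C(n,k) denotes the binomial coefficient 'n choose k'. -/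
open Finset

/-- Across-n recurrence: `C(n+1,k+1)*(n-k) = (n+1)*C(n,k+1)`. -/
lemma choose_recX (n k : ℕ) : (n+1).choose (k+1) * (n - k) = (n+1) * n.choose (k+1) := by
  have h1 := Nat.add_one_mul_choose_eq n (k+1)
  have h2 := Nat.choose_succ_right_eq (n+1) (k+1)
  have h3 : n + 1 - (k+1) = n - k := by omega
  rw [h3] at h2
  omega

/-- Two-term Vandermonde-type lower bound. -/
lemma pascal_ge (N k j : ℕ) : N.choose (k+1) + j * N.choose k ≤ (N+j).choose (k+1) := by
  induction j with
  | zero => simp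
  | succ j ih =>
      have h1 : N.choose k ≤ (N+j).choose k := Nat.choose_le_choose k (by omega)
      calc N.choose (k+1) + (j+1) * N.choose k
          = (N.choose (k+1) + j * N.choose k) + N.choose k := by ring
        _ ≤ (N+j).choose (k+1) + (N+j).choose k := Nat.add_le_add ih h1
        _ = (N+(j+1)).choose (k+1) := by
            rw [show N+(j+1) = (N+j)+1 from rfl, Nat.choose_succ_succ' (N+j) k]
            omega

/-- Four-term truncated Vandermonde lower bound. -/
lemma vander4 (m N u : ℕ) :
    N.choose (u+6) + m.choose 1 * N.choose (u+5) + m.choose 2 * N.choose (u+4)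
      + m.choose 3 * N.choose (u+3) ≤ (m+N).choose (u+6) := by
  rw [Nat.add_choose_eq, Finset.Nat.sum_antidiagonal_eq_sum_range_succ_mk]
  have hsub : Finset.range 4 ⊆ Finset.range (u+6+1) := Finset.range_subset_range.mpr (by omega)
  calc N.choose (u+6) + m.choose 1 * N.choose (u+5) + m.choose 2 * N.choose (u+4)
        + m.choose 3 * N.choose (u+3)
      = ∑ k ∈ Finset.range 4, m.choose k * N.choose (u+6-k) := by
        rw [Finset.sum_range_succ, Finset.sum_range_succ, Finset.sum_range_succ,
          Finset.sum_range_one]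
        rw [show u+6-1 = u+5 from by omega, show u+6-2 = u+4 from by omega,
          show u+6-3 = u+3 from by omega]
        simp [Nat.choose_zero_right]
    _ ≤ ∑ k ∈ Finset.range (u+6+1), m.choose k * N.choose (u+6-k) :=
        Finset.sum_le_sum_of_subset hsub

/-- The key ratio ("step") polynomial inequality, valid for `t ≤ v+1`. -/
lemma step_poly (v m t : ℕ) (hm : 2*m = (v+3)*(v+2)) (ht : t ≤ v+1) :
    (2*m+2+t)*((m+v+3+t)*((2*m+t)*(t+1))) ≤ (t+2)*((2*m+v+3+t)*((m+t)*(2*m+1+t))) := by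
  have e1 : 2*((2*m+2+t)*((m+v+3+t)*((2*m+t)*(t+1))))
      = ((v+3)*(v+2)+2+t)*((2*(v+3)+(v+3)*(v+2)+2*t)*(((v+3)*(v+2)+t)*(t+1))) := by
    rw [← hm]; ring
  have e2 : 2*((t+2)*((2*m+v+3+t)*((m+t)*(2*m+1+t))))
      = (t+2)*(((v+3)*(v+2)+(v+3)+t)*(((v+3)*(v+2)+2*t)*((v+3)*(v+2)+1+t))) := by
    rw [← hm]; ring
  have key : ((v+3)*(v+2)+2+t)*((2*(v+3)+(v+3)*(v+2)+2*t)*(((v+3)*(v+2)+t)*(t+1)))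
      ≤ (t+2)*(((v+3)*(v+2)+(v+3)+t)*(((v+3)*(v+2)+2*t)*((v+3)*(v+2)+1+t))) := by
    zify
    have htz : (t:ℤ) ≤ (v:ℤ) + 1 := by exact_mod_cast ht
    have ha : (0:ℤ) ≤ ((v:ℤ)+3)*((v:ℤ)+2)*(3*(v:ℤ)^3+22*(v:ℤ)^2+45*(v:ℤ)+26) := by positivity
    have hb : (0:ℤ) ≤ (((v:ℤ)+3)*((v:ℤ)+2)*(((v:ℤ)+3)*((v:ℤ)+1)^2))*((v:ℤ)+1-(t:ℤ)) :=
      mul_nonneg (by positivity) (by linarith)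
    have hc : (0:ℤ) ≤ (((v:ℤ)+3)*((v:ℤ)+2)*(((v:ℤ)+1)*((v:ℤ)+1+(t:ℤ))))*((v:ℤ)+1-(t:ℤ)) :=
      mul_nonneg (by positivity) (by linarith)
    nlinarith [ha, hb, hc]
  omega

/-- Direct two-term argument, valid for `v+3 ≤ t`. -/
lemma direct (v m t : ℕ) (hm : 2*m = (v+3)*(v+2)) (ht : v+3 ≤ t) :
    (2*m+1+t) * (m+v+2+t).choose (v+3) ≤ (1+t) * (2*m+v+2+t).choose (v+3) := by
  have hm3 : 3 ≤ m := by
    have h6 : 3*2 ≤ (v+3)*(v+2) := Nat.mul_le_mul (by omega) (by omega)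
    omega
  set N := m+v+2+t with hN
  have hp : N.choose (v+3) + m * N.choose (v+2) ≤ (2*m+v+2+t).choose (v+3) := by
    have := pascal_ge N (v+2) m
    rwa [show N + m = 2*m+v+2+t from by omega] at this
  have key : N.choose (v+3) * (v+3) = N.choose (v+2) * (m+t) := by
    have := Nat.choose_succ_right_eq N (v+2)
    rwa [show N - (v+2) = m + t from by omega] at this
  have hcoef : 2*(m+t) ≤ (1+t)*(v+3) := by nlinarith [hm, ht]
  have h2A : 2 * N.choose (v+3) ≤ (1+t) * N.choose (v+2) := by
    refine Nat.le_of_mul_le_mul_right ?_ (show 0 < v+3 by omega)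
    calc 2 * N.choose (v+3) * (v+3) = 2 * (N.choose (v+3) * (v+3)) := by ring
      _ = 2 * (N.choose (v+2) * (m+t)) := by rw [key]
      _ = N.choose (v+2) * (2*(m+t)) := by ring
      _ ≤ N.choose (v+2) * ((1+t)*(v+3)) := Nat.mul_le_mul_left _ hcoef
      _ = (1+t) * N.choose (v+2) * (v+3) := by ring
  calc (2*m+1+t) * N.choose (v+3)
      = (1+t) * N.choose (v+3) + m * (2 * N.choose (v+3)) := by ring
    _ ≤ (1+t) * N.choose (v+3) + m * ((1+t) * N.choose (v+2)) :=
        Nat.add_le_add_left (Nat.mul_le_mul_left _ h2A) _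
    _ = (1+t) * (N.choose (v+3) + m * N.choose (v+2)) := by ring
    _ ≤ (1+t) * (2*m+v+2+t).choose (v+3) := Nat.mul_le_mul_left _ hp

set_option maxHeartbeats 1000000 in
/-- Pure integer arithmetic core of the `t = 0`, `s = u+6` base case. -/
lemma base6_arith (u w : ℕ) (X C1 C2 C3 a2 a3 : ℤ) (hXnn : 0 ≤ X)
    (i1 : X*((u:ℤ)+6) = C1*((w:ℤ)+15))
    (i2 : C1*((u:ℤ)+5) = C2*((w:ℤ)+16))
    (i3 : C2*((u:ℤ)+4) = C3*((w:ℤ)+17))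
    (k2 : a2*2 = ((w:ℤ)+15)*((w:ℤ)+14))
    (k3 : a3*3 = a2*((w:ℤ)+13))
    (hmz : 2*((w:ℤ)+15) = ((u:ℤ)+6)*((u:ℤ)+5)) :
    (2*((w:ℤ)+15)+1)*X ≤ X + ((w:ℤ)+15)*C1 + a2*C2 + a3*C3 := by
  have j2 : C2*(((w:ℤ)+15)*((w:ℤ)+16)) = X*(((u:ℤ)+6)*((u:ℤ)+5)) := by
    linear_combination (-((u:ℤ)+5))*i1 + (-((w:ℤ)+15))*i2
  have j3 : C3*(((w:ℤ)+15)*((w:ℤ)+16)*((w:ℤ)+17)) = X*(((u:ℤ)+6)*((u:ℤ)+5)*((u:ℤ)+4)) := by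
    linear_combination ((u:ℤ)+4)*j2 + (-((w:ℤ)+15)*((w:ℤ)+16))*i3
  have k3' : a3*6 = ((w:ℤ)+15)*((w:ℤ)+14)*((w:ℤ)+13) := by
    linear_combination 2*k3 + ((w:ℤ)+13)*k2
  have eq : (X + ((w:ℤ)+15)*C1 + a2*C2 + a3*C3) * (96*((w:ℤ)+15)*((w:ℤ)+16)*((w:ℤ)+17))
      - (2*((w:ℤ)+15)+1)*X*(96*((w:ℤ)+15)*((w:ℤ)+16)*((w:ℤ)+17))
      = X*(((u:ℤ)+6)*((u:ℤ)+5)*(32736 + 96248*(u:ℤ) + 81384*(u:ℤ)^2 + 33098*(u:ℤ)^3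
          + 7492*(u:ℤ)^4 + 972*(u:ℤ)^5 + 68*(u:ℤ)^6 + 2*(u:ℤ)^7)) := by
    linear_combination (-(96*((w:ℤ)+15)*((w:ℤ)+16)*((w:ℤ)+17)))*i1
      + (48*((w:ℤ)+15)*((w:ℤ)+16)*((w:ℤ)+17)*C2)*k2
      + (48*((w:ℤ)+15)*((w:ℤ)+17)*((w:ℤ)+14))*j2
      + (16*((w:ℤ)+15)*((w:ℤ)+16)*((w:ℤ)+17)*C3)*k3'
      + (16*((w:ℤ)+15)*((w:ℤ)+14)*((w:ℤ)+13))*j3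
      + (X*(-96*(w:ℤ)^3 + (-4080 + 376*(u:ℤ) + 96*(u:ℤ)^2 + 8*(u:ℤ)^3)*(w:ℤ)^2
          + (-55488 + 16872*(u:ℤ) + 6172*(u:ℤ)^2 + 1052*(u:ℤ)^3 + 92*(u:ℤ)^4
             + 4*(u:ℤ)^5)*(w:ℤ)
          + (-205584 + 264728*(u:ℤ) + 152364*(u:ℤ)^2 + 47078*(u:ℤ)^3 + 8872*(u:ℤ)^4
             + 1032*(u:ℤ)^5 + 68*(u:ℤ)^6 + 2*(u:ℤ)^7)))*hmz
  have hQnn : (0:ℤ) ≤ X*(((u:ℤ)+6)*((u:ℤ)+5)*(32736 + 96248*(u:ℤ) + 81384*(u:ℤ)^2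
      + 33098*(u:ℤ)^3 + 7492*(u:ℤ)^4 + 972*(u:ℤ)^5 + 68*(u:ℤ)^6 + 2*(u:ℤ)^7)) := by
    apply mul_nonneg hXnn
    positivity
  have hscaled : (2*((w:ℤ)+15)+1)*X*(96*((w:ℤ)+15)*((w:ℤ)+16)*((w:ℤ)+17))
      ≤ (X + ((w:ℤ)+15)*C1 + a2*C2 + a3*C3)*(96*((w:ℤ)+15)*((w:ℤ)+16)*((w:ℤ)+17)) := by
    linarith
  exact le_of_mul_le_mul_right hscaled (by positivity)

/-- Base case `t = 0` for `s = u+6 ≥ 6`. -/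
lemma base6 (u m : ℕ) (hm : 2*m = (u+6)*(u+5)) :
    (2*m+1) * (m+u+5).choose (u+6) ≤ (2*m+u+5).choose (u+6) := by
  have h30 : 6*5 ≤ (u+6)*(u+5) := Nat.mul_le_mul (by omega) (by omega)
  obtain ⟨w, rfl⟩ : ∃ w, m = w + 15 := ⟨m - 15, by omega⟩
  rw [show w+15+u+5 = w+u+20 from by omega, show 2*(w+15)+u+5 = 2*w+u+35 from by omega,
    show 2*(w+15)+1 = 2*w+31 from by omega]
  have i1 : (w+u+20).choose (u+6) * (u+6) = (w+u+20).choose (u+5) * (w+15) := by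
    have := Nat.choose_succ_right_eq (w+u+20) (u+5)
    rwa [show w+u+20-(u+5) = w+15 from by omega] at this
  have i2 : (w+u+20).choose (u+5) * (u+5) = (w+u+20).choose (u+4) * (w+16) := by
    have := Nat.choose_succ_right_eq (w+u+20) (u+4)
    rwa [show w+u+20-(u+4) = w+16 from by omega] at this
  have i3 : (w+u+20).choose (u+4) * (u+4) = (w+u+20).choose (u+3) * (w+17) := by
    have := Nat.choose_succ_right_eq (w+u+20) (u+3)
    rwa [show w+u+20-(u+3) = w+17 from by omega] at this
  have k2 : (w+15).choose 2 * 2 = (w+15)*(w+14) := by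
    have := Nat.choose_succ_right_eq (w+15) 1
    rwa [Nat.choose_one_right, show w+15-1 = w+14 from by omega] at this
  have k3 : (w+15).choose 3 * 3 = (w+15).choose 2 * (w+13) := by
    have := Nat.choose_succ_right_eq (w+15) 2
    rwa [show w+15-2 = w+13 from by omega] at this
  have hv : (w+u+20).choose (u+6) + (w+15) * (w+u+20).choose (u+5)
      + (w+15).choose 2 * (w+u+20).choose (u+4) + (w+15).choose 3 * (w+u+20).choose (u+3)
      ≤ (2*w+u+35).choose (u+6) := by
    have := vander4 (w+15) (w+u+20) u
    rwa [Nat.choose_one_right, show (w+15) + (w+u+20) = 2*w+u+35 from by omega] at this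
  have harith := base6_arith u w ((w+u+20).choose (u+6) : ℤ) ((w+u+20).choose (u+5) : ℤ)
    ((w+u+20).choose (u+4) : ℤ) ((w+u+20).choose (u+3) : ℤ)
    ((w+15).choose 2 : ℤ) ((w+15).choose 3 : ℤ)
    (Int.natCast_nonneg _)
    (by exact_mod_cast i1) (by exact_mod_cast i2) (by exact_mod_cast i3)
    (by exact_mod_cast k2) (by exact_mod_cast k3) (by exact_mod_cast hm)
  zify
  zify at hv
  linarith

/-- Main inequality: away from the two exceptional cases. -/
lemma main_ineq (v m : ℕ) (hm : 2*m = (v+3)*(v+2)) :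
    ∀ t : ℕ, ¬(v = 0 ∧ t = 0) → ¬(v = 1 ∧ t = 0) →
    (2*m+1+t) * (m+v+2+t).choose (v+3) ≤ (1+t) * (2*m+v+2+t).choose (v+3) := by
  intro t
  induction t with
  | zero =>
    intro h0 h1
    rcases v with _ | _ | _ | v
    · exact absurd ⟨rfl, rfl⟩ h0
    · exact absurd ⟨rfl, rfl⟩ h1
    · have hm10 : m = 10 := by omega
      subst hm10
      decide
    · have hm' : 2*m = (v+6)*(v+5) := hm.trans (by ring)
      have hb := base6 v m hm'
      rw [show m+(v+3)+2+0 = m+v+5 from by omega,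
        show 2*m+(v+3)+2+0 = 2*m+v+5 from by omega,
        show 2*m+1+0 = 2*m+1 from by omega,
        show v+3+3 = v+6 from by omega]
      simpa using hb
  | succ t ih =>
    intro _ _
    by_cases hd : v+3 ≤ t+1
    · exact direct v m (t+1) hm hd
    · have ht' : t ≤ v+1 := by omega
      have hm3 : 3 ≤ m := by
        have h6 : 3*2 ≤ (v+3)*(v+2) := Nat.mul_le_mul (by omega) (by omega)
        omega
      by_cases hv0 : v = 0 ∧ t = 0
      · obtain ⟨rfl, rfl⟩ := hv0
        have hm6 : m = 3 := by omega
        subst hm6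
        decide
      · by_cases hv1 : v = 1 ∧ t = 0
        · obtain ⟨rfl, rfl⟩ := hv1
          have hm6 : m = 6 := by omega
          subst hm6
          decide
        · have ha := ih hv0 hv1
          have rec_a : (m+v+3+t).choose (v+3) * (m+t)
              = (m+v+3+t) * (m+v+2+t).choose (v+3) := by
            have := choose_recX (m+v+2+t) (v+2)
            rwa [show m+v+2+t+1 = m+v+3+t from by omega,
              show m+v+2+t-(v+2) = m+t from by omega] at this
          have rec_b : (2*m+v+3+t).choose (v+3) * (2*m+t)
              = (2*m+v+3+t) * (2*m+v+2+t).choose (v+3) := by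
            have := choose_recX (2*m+v+2+t) (v+2)
            rwa [show 2*m+v+2+t+1 = 2*m+v+3+t from by omega,
              show 2*m+v+2+t-(v+2) = 2*m+t from by omega] at this
          have hstep := step_poly v m t hm ht'
          rw [show m+v+2+(t+1) = m+v+3+t from by omega,
            show 2*m+v+2+(t+1) = 2*m+v+3+t from by omega,
            show 2*m+1+(t+1) = 2*m+2+t from by omega,
            show 1+(t+1) = 2+t from by omega]
          have hpos : 0 < (m+t)*((2*m+t)*((t+1)*(2*m+1+t))) :=
            Nat.mul_pos (by omega) (Nat.mul_pos (by omega)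
              (Nat.mul_pos (by omega) (by omega)))
          refine Nat.le_of_mul_le_mul_right ?_ hpos
          calc (2*m+2+t) * (m+v+3+t).choose (v+3) * ((m+t)*((2*m+t)*((t+1)*(2*m+1+t))))
              = ((2*m+2+t)*((2*m+t)*(t+1)*(2*m+1+t))) * ((m+v+3+t).choose (v+3) * (m+t)) := by
                ring
            _ = ((2*m+2+t)*((2*m+t)*(t+1)*(2*m+1+t)))
                * ((m+v+3+t) * (m+v+2+t).choose (v+3)) := by rw [rec_a]
            _ = ((2*m+2+t)*((m+v+3+t)*((2*m+t)*(t+1))))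
                * ((2*m+1+t) * (m+v+2+t).choose (v+3)) := by ring
            _ ≤ ((t+2)*((2*m+v+3+t)*((m+t)*(2*m+1+t))))
                * ((1+t) * (2*m+v+2+t).choose (v+3)) := Nat.mul_le_mul hstep ha
            _ = ((t+2)*((m+t)*(2*m+1+t))*(1+t))
                * ((2*m+v+3+t) * (2*m+v+2+t).choose (v+3)) := by ring
            _ = ((t+2)*((m+t)*(2*m+1+t))*(1+t))
                * ((2*m+v+3+t).choose (v+3) * (2*m+t)) := by rw [rec_b]
            _ = (2+t) * (2*m+v+3+t).choose (v+3) * ((m+t)*((2*m+t)*((t+1)*(2*m+1+t)))) := by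
                ring

/-- Let `s ≥ 3` and `δ ≥ s(s-1)/2 - 1` be integers, and set
`r = s(s+1)/2 + δ`.  Then `C(s+δ, δ) > ((2δ + 4 - s² + s)/(s² - s + 2δ + 4)) * C(r, s)`
(as rational numbers) if and only if `(s, δ) = (3, 2)` or `(s, δ) = (4, 5)`. -/
theorem minimal_resolution_conjecture_exceptional_cases
    (s δ r : ℕ) (hs : 3 ≤ s) (hδ : s * (s - 1) / 2 - 1 ≤ δ)
    (hr : r = s * (s + 1) / 2 + δ) :
    (((s + δ).choose δ : ℚ)
        > ((2 * (δ : ℚ) + 4 - (s : ℚ) ^ 2 + s) / ((s : ℚ) ^ 2 - s + 2 * δ + 4))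
            * (r.choose s : ℚ))
      ↔ ((s = 3 ∧ δ = 2) ∨ (s = 4 ∧ δ = 5)) := by
  obtain ⟨v, rfl⟩ : ∃ v, s = v+3 := ⟨s-3, by omega⟩
  -- arithmetic preliminaries
  have heven : 2 ∣ (v+3)*(v+2) := by
    have h := Nat.even_mul_succ_self (v+2)
    rw [show v+2+1 = v+3 from by omega] at h
    rw [show (v+3)*(v+2) = (v+2)*(v+3) from by ring]
    exact h.two_dvd
  rw [show v+3-1 = v+2 from by omega] at hδ
  have hm2 : 2*((v+3)*(v+2)/2) = (v+3)*(v+2) := Nat.mul_div_cancel' heven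
  have h6 : 3*2 ≤ (v+3)*(v+2) := Nat.mul_le_mul (by omega) (by omega)
  obtain ⟨m1, hm1⟩ : ∃ m1, (v+3)*(v+2)/2 = m1+1 := ⟨(v+3)*(v+2)/2 - 1, by omega⟩
  have hmn : 2*(m1+1) = (v+3)*(v+2) := by omega
  obtain ⟨t, rfl⟩ : ∃ t, δ = m1 + t := ⟨δ - m1, by omega⟩
  -- express r
  have heven2 : 2 ∣ (v+3)*((v+3)+1) := (Nat.even_mul_succ_self (v+3)).two_dvd
  have hsum : 2*((v+3)*((v+3)+1)/2) = (v+3)*((v+3)+1) := Nat.mul_div_cancel' heven2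
  have e0 : (v+3)*((v+3)+1) = (v+3)*(v+2) + 2*(v+3) := by ring
  have hX : (v+3)*((v+3)+1)/2 = m1+v+4 :=
    Nat.div_eq_of_eq_mul_left (by norm_num) (by omega)
  rw [hX] at hr
  have hr2 : r = 2*m1+v+4+t := by omega
  -- symmetry of the first binomial coefficient
  have hsymm : (v+3+(m1+t)).choose (m1+t) = (m1+v+3+t).choose (v+3) := by
    have h := Nat.choose_symm (show m1+t ≤ v+3+(m1+t) from by omega)
    rw [show v+3+(m1+t) - (m1+t) = v+3 from by omega] at h
    rw [← h, show v+3+(m1+t) = m1+v+3+t from by omega]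
  rw [hsymm, hr2]
  -- cast equalities
  have hmq : 2*((m1:ℚ)+1) = ((v:ℚ)+3)*((v:ℚ)+2) := by exact_mod_cast hmn
  have hnum : 2 * ((m1 + t : ℕ) : ℚ) + 4 - ((v + 3 : ℕ) : ℚ) ^ 2 + ((v + 3 : ℕ) : ℚ)
      = 2*(t:ℚ)+2 := by
    push_cast
    linear_combination hmq
  have hden : ((v + 3 : ℕ) : ℚ) ^ 2 - ((v + 3 : ℕ) : ℚ) + 2 * ((m1 + t : ℕ) : ℚ) + 4
      = 2*((2*m1+t+3 : ℚ)) := by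
    push_cast
    linear_combination -hmq
  have hden0 : (0:ℚ) < ((v + 3 : ℕ) : ℚ) ^ 2 - ((v + 3 : ℕ) : ℚ) + 2 * ((m1 + t : ℕ) : ℚ) + 4 := by
    rw [hden]; positivity
  rw [gt_iff_lt, div_mul_eq_mul_div, div_lt_iff₀ hden0, hnum, hden]
  -- reduce to a strict inequality between natural numbers
  have key : ((2*(t:ℚ)+2) * ((2*m1+v+4+t).choose (v+3) : ℚ)
        < ((m1+v+3+t).choose (v+3) : ℚ) * (2*((2*m1+t+3 : ℚ))))
      ↔ ((1+t) * (2*m1+v+4+t).choose (v+3) < (2*(m1+1)+1+t) * (m1+v+3+t).choose (v+3)) := by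
    constructor
    · intro h
      have h' : ((1+t : ℕ) : ℚ) * ((2*m1+v+4+t).choose (v+3) : ℚ)
          < ((2*(m1+1)+1+t : ℕ) : ℚ) * ((m1+v+3+t).choose (v+3) : ℚ) := by
        push_cast at h ⊢
        linarith
      exact_mod_cast h'
    · intro h
      have h' : ((1+t : ℕ) : ℚ) * ((2*m1+v+4+t).choose (v+3) : ℚ)
          < ((2*(m1+1)+1+t : ℕ) : ℚ) * ((m1+v+3+t).choose (v+3) : ℚ) := by
        exact_mod_cast h
      push_cast at h' ⊢
      linarith
  rw [key]
  constructor
  · intro hlt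
    by_contra hne
    push_neg at hne
    obtain ⟨hne1, hne2⟩ := hne
    have h0 : ¬(v = 0 ∧ t = 0) := by
      rintro ⟨rfl, rfl⟩
      exact (hne1 (by omega)) (by omega)
    have h1 : ¬(v = 1 ∧ t = 0) := by
      rintro ⟨rfl, rfl⟩
      exact (hne2 (by omega)) (by omega)
    have hmain := main_ineq v (m1+1) hmn t h0 h1
    rw [show m1+1+v+2+t = m1+v+3+t from by omega,
      show 2*(m1+1)+v+2+t = 2*m1+v+4+t from by omega] at hmain
    exact absurd hlt (not_lt.mpr hmain)
  · rintro (⟨h3, h2⟩ | ⟨h4, h5⟩)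
    · have hv : v = 0 := by omega
      subst hv
      have hm1' : m1 = 2 := by omega
      subst hm1'
      have ht0 : t = 0 := by omega
      subst ht0
      decide
    · have hv : v = 1 := by omega
      subst hv
      have hm1' : m1 = 5 := by omega
      subst hm1'
      have ht0 : t = 0 := by omega
      subst ht0
      decide
end
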